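/- For all integers A ≥ 1, B ≥ 1 and every complex u with u ∉ {0, 1, −1}, the second derivative of u ↦ f_{A,B}(u) at u equals A·B·[ (f_{A−1,B}(u) + f_{A,B−1}(u))/(u(u+1)) + (f_{A+1,B}(u) + f_{A,B+1}(u))/(u(u−1)) − 4 f_{A,B}(u)/((u+1)(u−1)) ]. -/

import Mathlib

/-- `f A B u` is the contour integral
`(1/(2πi)) ∮_{|z|=r} (1 + 1/(u+z−1))^A (1 − 1/z)^B dz`
over a circle of radius `0 < r < |1−u|` centered at `0` (here `r = |1−u|/2`);
the value is independent of the choice of such `r`. -/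
noncomputable def f (A B : ℕ) (u : ℂ) : ℂ :=
  (2 * Real.pi * Complex.I)⁻¹ *
    (∮ z in C(0, ‖1 - u‖ / 2), (1 + (u + z - 1)⁻¹) ^ A * (1 - z⁻¹) ^ B)

/-!
Write the integrand as `X ^ A * Y ^ B` with `X = 1 + (u + z - 1)⁻¹` and `Y = 1 - z⁻¹`.
Since `∂ᵤ X = -(X - 1) ^ 2` and `∂_z Y = (Y - 1) ^ 2`, the `u`-derivative of the integrand is `-A`
times its second difference in `A`, and its `z`-derivative adds `B` times its second difference
in `B`. Differentiating under the integral sign, and using that the integral of a `z`-derivative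
around the circle vanishes, `f'` is both `-A` times the second difference of `f` in `A` and `-B`
times the one in `B`. Hence `f''` is `A * B` times the mixed second difference of `f`, whose four
corner values `f (A ± 1) (B ± 1)` are eliminated by the contiguous relation coming from
`(u - 1) * X * Y = -(u + 1) + u * X + u * Y`.
-/

open Complex Metric Real Set Filter Topology MeasureTheory

/-- With truncated subtraction, `a (n - 1) = a 0` when `n = 0`. -/
def secondDiff {M : Type*} [AddCommGroup M] (a : ℕ → M) (n : ℕ) : M :=
  a (n + 1) - 2 • a n + a (n - 1)

theorem mul_secondDiff {R : Type*} [CommRing R] (c : R) (a : ℕ → R) (n : ℕ) :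
    c * secondDiff a n = secondDiff (fun k => c * a k) n := by
  simp only [secondDiff, nsmul_eq_mul]
  ring

theorem HasDerivAt.secondDiff {𝕜 E : Type*} [NontriviallyNormedField 𝕜] [NormedAddCommGroup E]
    [NormedSpace 𝕜 E] {F : ℕ → 𝕜 → E} {F' : ℕ → E} {x : 𝕜}
    (h : ∀ k, HasDerivAt (F k) (F' k) x) (n : ℕ) :
    HasDerivAt (fun y => secondDiff (F · y) n) (secondDiff F' n) x :=
  ((h _).sub ((h n).const_smul 2)).add (h _)

theorem circleIntegral.integral_secondDiff {E : Type*} [NormedAddCommGroup E] [NormedSpace ℂ E]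
    {F : ℕ → ℂ → E} {c : ℂ} {R : ℝ} (hF : ∀ k, CircleIntegrable (F k) c R) (n : ℕ) :
    (∮ z in C(c, R), secondDiff (F · z) n) = secondDiff (fun k => ∮ z in C(c, R), F k z) n := by
  simp only [secondDiff, two_nsmul]
  have h2 : CircleIntegrable (fun z => F n z + F n z) c R := (hF n).add (hF n)
  rw [integral_add (f := fun z => F (n + 1) z - (F n z + F n z)) ((hF _).sub h2) (hF _),
    integral_sub (g := fun z => F n z + F n z) (hF _) h2, integral_add (hF n) (hF n)]

theorem CircleIntegrable.secondDiff {E : Type*} [NormedAddCommGroup E] {F : ℕ → ℂ → E} {c : ℂ}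
    {R : ℝ} (hF : ∀ k, CircleIntegrable (F k) c R) (n : ℕ) :
    CircleIntegrable (fun z => _root_.secondDiff (F · z) n) c R := by
  simp only [_root_.secondDiff, two_nsmul]
  exact ((hF _).sub ((hF n).add (hF n))).add (hF _)

theorem circleIntegral.hasDerivAt_integral_of_continuousOn {E : Type*} [NormedAddCommGroup E]
    [NormedSpace ℂ E] [CompleteSpace E] {F F' : ℂ → ℂ → E} {u₀ c : ℂ} {ε R : ℝ}
    (hε : 0 < ε) (hR : 0 ≤ R)
    (hF : ∀ u ∈ closedBall u₀ ε, ContinuousOn (F u) (sphere c R))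
    (hF' : ContinuousOn (fun p : ℂ × ℂ => F' p.1 p.2) (closedBall u₀ ε ×ˢ sphere c R))
    (hd : ∀ u ∈ closedBall u₀ ε, ∀ z ∈ sphere c R, HasDerivAt (F · z) (F' u z) u) :
    HasDerivAt (fun u => ∮ z in C(c, R), F u z) (∮ z in C(c, R), F' u₀ z) u₀ := by
  obtain ⟨M, hM⟩ :=
    ((isCompact_closedBall u₀ ε).prod (isCompact_sphere c R)).exists_bound_of_continuousOn hF'
  have hu₀ : u₀ ∈ closedBall u₀ ε := mem_closedBall_self hε.le
  have hint : ∀ u ∈ closedBall u₀ ε, CircleIntegrable (F u) c R :=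
    fun u hu => (hF u hu).circleIntegrable hR
  have hint' : CircleIntegrable (F' u₀) c R :=
    (hF'.comp (continuousOn_const.prodMk continuousOn_id) fun _ hz => ⟨hu₀, hz⟩).circleIntegrable hR
  refine (intervalIntegral.hasDerivAt_integral_of_dominated_loc_of_deriv_le
    (F := fun u θ => deriv (circleMap c R) θ • F u (circleMap c R θ))
    (F' := fun u θ => deriv (circleMap c R) θ • F' u (circleMap c R θ))
    (bound := fun _ => |R| * M) (closedBall_mem_nhds u₀ hε) ?_ (hint u₀ hu₀).out
    hint'.out.aestronglyMeasurable_restrict_uIoc ?_ intervalIntegrable_const ?_).2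
  · filter_upwards [closedBall_mem_nhds u₀ hε] with u hu
    exact (hint u hu).out.aestronglyMeasurable_restrict_uIoc
  · refine ae_of_all _ fun θ _ u hu => ?_
    rw [norm_smul, deriv_circleMap, norm_mul, norm_circleMap_zero, norm_I, mul_one]
    exact mul_le_mul_of_nonneg_left (hM (u, _) ⟨hu, circleMap_mem_sphere c hR θ⟩) (abs_nonneg R)
  · exact ae_of_all _ fun θ _ u hu => (hd u hu _ (circleMap_mem_sphere c hR θ)).const_smul _

theorem hasDerivAt_one_add_inv_pow {𝕜 : Type*} [NontriviallyNormedField 𝕜] (n : ℕ) {w : 𝕜}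
    (hw : w ≠ 0) :
    HasDerivAt (fun w => (1 + w⁻¹) ^ n) (-n * secondDiff (fun k => (1 + w⁻¹) ^ k) n) w := by
  refine (((hasDerivAt_inv hw).const_add 1).pow n).congr_deriv ?_
  rcases n with _ | m
  · simp
  · simp only [secondDiff, nsmul_eq_mul, Nat.add_sub_cancel, ← inv_pow]
    push_cast
    ring

noncomputable def integrand (A B : ℕ) (u z : ℂ) : ℂ :=
  (1 + (u + z - 1)⁻¹) ^ A * (1 - z⁻¹) ^ B

theorem hasDerivAt_integrand_param (A B : ℕ) {u z : ℂ} (hw : u + z - 1 ≠ 0) :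
    HasDerivAt (integrand A B · z) (-A * secondDiff (fun a => integrand a B u z) A) u := by
  have hX := (hasDerivAt_one_add_inv_pow A hw).comp u (((hasDerivAt_id u).add_const z).sub_const 1)
  refine (hX.mul_const ((1 - z⁻¹) ^ B)).congr_deriv ?_
  simp only [integrand, secondDiff, nsmul_eq_mul]
  ring

theorem hasDerivAt_integrand (A B : ℕ) {u z : ℂ} (hz : z ≠ 0) (hw : u + z - 1 ≠ 0) :
    HasDerivAt (integrand A B u)
      (-A * secondDiff (fun a => integrand a B u z) A +
        B * secondDiff (fun b => integrand A b u z) B) z := by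
  have hX := (hasDerivAt_one_add_inv_pow A hw).comp z (((hasDerivAt_id z).const_add u).sub_const 1)
  have hY : HasDerivAt (fun z => (1 - z⁻¹) ^ B) (B * secondDiff (fun b => (1 - z⁻¹) ^ b) B) z := by
    have h := (hasDerivAt_one_add_inv_pow B (neg_ne_zero.2 hz)).comp z (hasDerivAt_neg z)
    simp only [Function.comp_def, inv_neg, ← sub_eq_add_neg] at h
    exact h.congr_deriv (by ring)
  refine (hX.mul hY).congr_deriv ?_
  simp only [integrand, secondDiff, nsmul_eq_mul, Function.comp_apply, id]
  ring

theorem continuousAt_integrand (A B : ℕ) {p : ℂ × ℂ} (hz : p.2 ≠ 0) (hw : p.1 + p.2 - 1 ≠ 0) :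
    ContinuousAt (fun q : ℂ × ℂ => integrand A B q.1 q.2) p := by
  unfold integrand
  fun_prop (disch := assumption)

theorem add_sub_one_ne_zero_of_norm_lt {u z : ℂ} (h : ‖z‖ < ‖1 - u‖) : u + z - 1 ≠ 0 := by
  intro h0
  rw [show z = 1 - u by linear_combination h0] at h
  exact lt_irrefl _ h

theorem differentiableAt_integrand (A B : ℕ) {u z : ℂ} (hz : z ≠ 0) (h : ‖z‖ < ‖1 - u‖) :
    DifferentiableAt ℂ (integrand A B u) z :=
  (hasDerivAt_integrand A B hz (add_sub_one_ne_zero_of_norm_lt h)).differentiableAt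

theorem ne_zero_and_add_sub_one_ne_zero_of_mem_sphere {u z : ℂ} {r : ℝ} (hr : 0 < r)
    (hr' : r < ‖1 - u‖) (hz : z ∈ sphere (0 : ℂ) r) : z ≠ 0 ∧ u + z - 1 ≠ 0 := by
  rw [mem_sphere_zero_iff_norm] at hz
  exact ⟨norm_pos_iff.1 (hz ▸ hr), add_sub_one_ne_zero_of_norm_lt (hz ▸ hr')⟩

theorem circleIntegrable_integrand (A B : ℕ) {u : ℂ} {r : ℝ} (hr : 0 < r) (hr' : r < ‖1 - u‖) :
    CircleIntegrable (integrand A B u) 0 r := by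
  refine ContinuousOn.circleIntegrable hr.le fun z hz => ?_
  obtain ⟨hz0, hw⟩ := ne_zero_and_add_sub_one_ne_zero_of_mem_sphere hr hr' hz
  exact (hasDerivAt_integrand A B hz0 hw).continuousAt.continuousWithinAt

theorem f_eq_circleIntegral (A B : ℕ) {u : ℂ} {r : ℝ} (hr : 0 < r) (hr' : r < ‖1 - u‖) :
    f A B u = (2 * π * I)⁻¹ * ∮ z in C(0, r), integrand A B u z := by
  have hannulus : ∀ {r R : ℝ}, 0 < r → r ≤ R → R < ‖1 - u‖ →
      (∮ z in C(0, R), integrand A B u z) = ∮ z in C(0, r), integrand A B u z := by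
    intro r R hr hrR hR
    have hdiff : ∀ z, r ≤ ‖z‖ → ‖z‖ ≤ R → DifferentiableAt ℂ (integrand A B u) z :=
      fun z h₁ h₂ =>
        differentiableAt_integrand A B (norm_pos_iff.1 (hr.trans_le h₁)) (h₂.trans_lt hR)
    refine Complex.circleIntegral_eq_of_differentiable_on_annulus_off_countable hr hrR
      countable_empty (fun z ⟨h₁, h₂⟩ => ?_) (fun z ⟨⟨h₁, h₂⟩, _⟩ => ?_)
    · simp only [mem_closedBall_zero_iff, mem_ball_zero_iff, not_lt] at h₁ h₂
      exact (hdiff z h₂ h₁).continuousAt.continuousWithinAt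
    · simp only [mem_closedBall_zero_iff, mem_ball_zero_iff, not_le] at h₁ h₂
      exact hdiff z h₂.le h₁.le
  have hpos : 0 < ‖1 - u‖ := hr.trans hr'
  show (2 * π * I)⁻¹ * (∮ z in C(0, ‖1 - u‖ / 2), integrand A B u z) = _
  rcases le_total r (‖1 - u‖ / 2) with h | h
  · rw [hannulus hr h (by linarith)]
  · rw [← hannulus (by linarith) h hr']

theorem f_eventuallyEq_circleIntegral (A B : ℕ) {u₀ : ℂ} (hu₀ : u₀ ≠ 1) :
    ∀ᶠ u in 𝓝 u₀, f A B u = (2 * π * I)⁻¹ * ∮ z in C(0, ‖1 - u₀‖ / 2), integrand A B u z := by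
  have hpos : 0 < ‖1 - u₀‖ := norm_pos_iff.2 (sub_ne_zero.2 hu₀.symm)
  filter_upwards [ball_mem_nhds u₀ (half_pos hpos)] with u hu
  rw [mem_ball_iff_norm] at hu
  have := norm_sub_le_norm_sub_add_norm_sub (1 : ℂ) u u₀
  exact f_eq_circleIntegral A B (half_pos hpos) (by linarith)

theorem secondDiff_f_eq_circleIntegral {u : ℂ} {r : ℝ} (hr : 0 < r) (hr' : r < ‖1 - u‖)
    (a b : ℕ → ℕ) (n : ℕ) :
    secondDiff (fun k => f (a k) (b k) u) n =
      (2 * π * I)⁻¹ * ∮ z in C(0, r), secondDiff (fun k => integrand (a k) (b k) u z) n := by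
  rw [circleIntegral.integral_secondDiff fun k => circleIntegrable_integrand _ _ hr hr',
    mul_secondDiff]
  simp only [f_eq_circleIntegral _ _ hr hr']

theorem hasDerivAt_f_secondDiff_fst (A B : ℕ) {u₀ : ℂ} (hu₀ : u₀ ≠ 1) :
    HasDerivAt (f A B) (-A * secondDiff (fun a => f a B u₀) A) u₀ := by
  set r := ‖1 - u₀‖ / 2 with hr_def
  have hr : 0 < r := half_pos (norm_pos_iff.2 (sub_ne_zero.2 hu₀.symm))
  have hgood : ∀ u ∈ closedBall u₀ (r / 2), ∀ z ∈ sphere (0 : ℂ) r, z ≠ 0 ∧ ‖z‖ < ‖1 - u‖ := by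
    intro u hu z hz
    rw [mem_closedBall_iff_norm] at hu
    rw [mem_sphere_zero_iff_norm] at hz
    have := norm_sub_le_norm_sub_add_norm_sub (1 : ℂ) u u₀
    exact ⟨norm_pos_iff.1 (hz ▸ hr), by linarith [hr_def]⟩
  have hcont : ContinuousOn (fun p : ℂ × ℂ => -A * secondDiff (fun a => integrand a B p.1 p.2) A)
      (closedBall u₀ (r / 2) ×ˢ sphere 0 r) := by
    rintro ⟨u, z⟩ ⟨hu, hz⟩
    obtain ⟨hz0, hlt⟩ := hgood u hu z hz
    have hc : ∀ a, ContinuousAt (fun q : ℂ × ℂ => integrand a B q.1 q.2) (u, z) :=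
      fun a => continuousAt_integrand a B hz0 (add_sub_one_ne_zero_of_norm_lt hlt)
    simp only [secondDiff]
    exact (continuousAt_const.mul
      (((hc _).sub ((hc A).const_smul 2)).add (hc _))).continuousWithinAt
  have hI := circleIntegral.hasDerivAt_integral_of_continuousOn (half_pos hr) hr.le
    (fun u hu z hz => (differentiableAt_integrand A B (hgood u hu z hz).1
      (hgood u hu z hz).2).continuousAt.continuousWithinAt) hcont
    (fun u hu z hz => hasDerivAt_integrand_param A B
      (add_sub_one_ne_zero_of_norm_lt (hgood u hu z hz).2))
  refine ((hI.const_mul (2 * π * I)⁻¹).congr_of_eventuallyEq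
    (f_eventuallyEq_circleIntegral A B hu₀)).congr_deriv ?_
  rw [circleIntegral.integral_const_mul, secondDiff_f_eq_circleIntegral hr (by linarith [hr_def])]
  ring

theorem mul_secondDiff_f_fst_eq_snd (A B : ℕ) {u : ℂ} (hu : u ≠ 1) :
    A * secondDiff (fun a => f a B u) A = B * secondDiff (fun b => f A b u) B := by
  obtain ⟨r, hr, hr'⟩ := exists_between (norm_pos_iff.2 (sub_ne_zero.2 hu.symm))
  have hint a b := circleIntegrable_integrand a b hr hr'
  have hzero := circleIntegral.integral_eq_zero_of_hasDerivWithinAt hr.le fun z hz =>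
    have ⟨hz0, hw⟩ := ne_zero_and_add_sub_one_ne_zero_of_mem_sphere hr hr' hz
    (hasDerivAt_integrand A B hz0 hw).hasDerivWithinAt
  have hintA : CircleIntegrable (fun z => -A * secondDiff (fun a => integrand a B u z) A) 0 r :=
    (CircleIntegrable.secondDiff (hint · B) A).const_smul
  have hintB : CircleIntegrable (fun z => B * secondDiff (fun b => integrand A b u z) B) 0 r :=
    (CircleIntegrable.secondDiff (hint A) B).const_smul
  rw [circleIntegral.integral_add hintA hintB, circleIntegral.integral_const_mul,
    circleIntegral.integral_const_mul] at hzero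
  rw [secondDiff_f_eq_circleIntegral hr hr' (fun a => a) (fun _ => B),
    secondDiff_f_eq_circleIntegral hr hr' (fun _ => A) (fun b => b)]
  linear_combination -(2 * π * I)⁻¹ * hzero

theorem hasDerivAt_f_secondDiff_snd (A B : ℕ) {u : ℂ} (hu : u ≠ 1) :
    HasDerivAt (f A B) (-B * secondDiff (fun b => f A b u) B) u := by
  refine (hasDerivAt_f_secondDiff_fst A B hu).congr_deriv ?_
  rw [neg_mul, neg_mul, mul_secondDiff_f_fst_eq_snd A B hu]

theorem integrand_contiguous (a b : ℕ) {u z : ℂ} (hz : z ≠ 0) (hw : u + z - 1 ≠ 0) :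
    (u - 1) * integrand (a + 1) (b + 1) u z =
      -(u + 1) * integrand a b u z + u * integrand (a + 1) b u z + u * integrand a (b + 1) u z := by
  have key : (u - 1) * ((1 + (u + z - 1)⁻¹) * (1 - z⁻¹)) =
      -(u + 1) + u * (1 + (u + z - 1)⁻¹) + u * (1 - z⁻¹) := by
    field_simp
    ring
  simp only [integrand, pow_succ]
  linear_combination (1 + (u + z - 1)⁻¹) ^ a * (1 - z⁻¹) ^ b * key

theorem f_contiguous (a b : ℕ) {u : ℂ} (hu : u ≠ 1) :
    (u - 1) * f (a + 1) (b + 1) u =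
      -(u + 1) * f a b u + u * f (a + 1) b u + u * f a (b + 1) u := by
  obtain ⟨r, hr, hr'⟩ := exists_between (norm_pos_iff.2 (sub_ne_zero.2 hu.symm))
  have hint (c : ℂ) (m n : ℕ) : CircleIntegrable (fun z => c * integrand m n u z) 0 r :=
    (circleIntegrable_integrand m n hr hr').const_smul
  have h : (∮ z in C(0, r), (u - 1) * integrand (a + 1) (b + 1) u z) =
      ∮ z in C(0, r), -(u + 1) * integrand a b u z + u * integrand (a + 1) b u z +
        u * integrand a (b + 1) u z := by
    refine circleIntegral.integral_congr hr.le fun z hz => ?_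
    obtain ⟨hz0, hw⟩ := ne_zero_and_add_sub_one_ne_zero_of_mem_sphere hr hr' hz
    exact integrand_contiguous a b hz0 hw
  have hsum : CircleIntegrable
      (fun z => -(u + 1) * integrand a b u z + u * integrand (a + 1) b u z) 0 r :=
    (hint _ _ _).add (hint _ _ _)
  rw [circleIntegral.integral_const_mul, circleIntegral.integral_add hsum (hint _ _ _),
    circleIntegral.integral_add (hint _ _ _) (hint _ _ _),
    circleIntegral.integral_const_mul, circleIntegral.integral_const_mul,
    circleIntegral.integral_const_mul] at h
  simp only [f_eq_circleIntegral _ _ hr hr']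
  linear_combination (2 * π * I)⁻¹ * h

theorem secondDiff_secondDiff_of_contiguous {F : ℕ → ℕ → ℂ} {u : ℂ}
    (hF : ∀ a b, (u - 1) * F (a + 1) (b + 1) = -(u + 1) * F a b + u * F (a + 1) b + u * F a (b + 1))
    {A B : ℕ} (hA : 1 ≤ A) (hB : 1 ≤ B) (hu0 : u ≠ 0) (hu1 : u ≠ 1) (hum1 : u ≠ -1) :
    secondDiff (fun a => secondDiff (F a) B) A =
      (F (A - 1) B + F A (B - 1)) / (u * (u + 1)) + (F (A + 1) B + F A (B + 1)) / (u * (u - 1))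
        - 4 * F A B / ((u + 1) * (u - 1)) := by
  obtain ⟨a, rfl⟩ := Nat.exists_eq_add_of_le' hA
  obtain ⟨b, rfl⟩ := Nat.exists_eq_add_of_le' hB
  have h₁ : u - 1 ≠ 0 := sub_ne_zero.2 hu1
  have h₂ : u + 1 ≠ 0 := by rwa [← sub_neg_eq_add, sub_ne_zero]
  simp only [secondDiff, Nat.add_sub_cancel, nsmul_eq_mul]
  field_simp
  -- each of these four relations contains exactly one corner value `F (A ± 1) (B ± 1)`
  linear_combination u * (u + 1) * hF (a + 1) (b + 1) + u * (u - 1) * hF a b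
    - (u + 1) * (u - 1) * hF (a + 1) b - (u + 1) * (u - 1) * hF a (b + 1)

/-- Second-derivative identity (\ref{fAB-der-der-1}). -/
theorem stmt4 (A B : ℕ) (hA : 1 ≤ A) (hB : 1 ≤ B) (u : ℂ) (hu0 : u ≠ 0)
    (hu1 : u ≠ 1) (hum1 : u ≠ -1) :
    iteratedDeriv 2 (f A B) u =
      (A : ℂ) * (B : ℂ) *
        ((f (A - 1) B u + f A (B - 1) u) / (u * (u + 1))
          + (f (A + 1) B u + f A (B + 1) u) / (u * (u - 1))
          - 4 * f A B u / ((u + 1) * (u - 1))) := by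
  have hderiv : deriv (f A B) =ᶠ[𝓝 u] fun v => -A * secondDiff (fun a => f a B v) A :=
    (eventually_ne_nhds hu1).mono fun v hv => (hasDerivAt_f_secondDiff_fst A B hv).deriv
  have hderiv2 : HasDerivAt (fun v => -A * secondDiff (fun a => f a B v) A)
      (A * B * secondDiff (fun a => secondDiff (fun b => f a b u) B) A) u := by
    refine ((HasDerivAt.secondDiff (fun a => hasDerivAt_f_secondDiff_snd a B hu1) A).const_mul
      _).congr_deriv ?_
    rw [← mul_secondDiff]
    ring
  rw [iteratedDeriv_succ, iteratedDeriv_one, hderiv.deriv_eq, hderiv2.deriv,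
    secondDiff_secondDiff_of_contiguous (fun a b => f_contiguous a b hu1) hA hB hu0 hu1 hum1]
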